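/- The Leibniz algebras 𝔏₆⁰ (product e₂e₃ = e₂) and 𝔏₆¹ (products e₁e₃ = e₁, e₂e₃ = e₂) are not isomorphic. -/
import Mathlib


/-- Multiplication of `𝔏₆⁰` on ℂ³ (basis `e₁,e₂,e₃` = indices `0,1,2`):
sole nonzero basis product `e₂e₃ = e₂`. -/
def mulL60 (x y : Fin 3 → ℂ) : Fin 3 → ℂ := ![0, x 1 * y 2, 0]

/-- Multiplication of `𝔏₆¹` on ℂ³: `e₁e₃ = e₁`, `e₂e₃ = e₂`, other basis
products zero. -/
def mulL61 (x y : Fin 3 → ℂ) : Fin 3 → ℂ := ![x 0 * y 2, x 1 * y 2, 0]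

lemma mulL60_smul (x y : Fin 3 → ℂ) :
    mulL60 x y = (x 1 * y 2) • ![(0:ℂ), 1, 0] := by
  funext i
  fin_cases i <;> simp [mulL60]

/-- The Leibniz algebras `𝔏₆⁰` and `𝔏₆¹` are not isomorphic. -/
theorem stmt_16 :
    ¬ ∃ φ : (Fin 3 → ℂ) ≃ₗ[ℂ] (Fin 3 → ℂ),
      ∀ x y, φ (mulL60 x y) = mulL61 (φ x) (φ y) := by
  rintro ⟨φ, h⟩
  set v : Fin 3 → ℂ := φ ![0, 1, 0] with hv
  set u₁ := φ.symm ![1, 0, 0] with hu₁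
  set u₂ := φ.symm ![0, 0, 1] with hu₂
  set w := φ.symm ![0, 1, 0] with hw
  have key : ∀ x y : Fin 3 → ℂ,
      ((x 1 * y 2) • v) = mulL61 (φ x) (φ y) := by
    intro x y
    rw [← h x y, mulL60_smul, map_smul]
  have h1 := key u₁ u₂
  have h2 := key w u₂
  rw [hu₁, hu₂, φ.apply_symm_apply, φ.apply_symm_apply] at h1
  rw [hw, hu₂, φ.apply_symm_apply, φ.apply_symm_apply] at h2
  set c₁ := u₁ 1 * u₂ 2
  set c₂ := w 1 * u₂ 2
  have e10 : c₁ * v 0 = 1 := by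
    have := congrFun h1 0; simpa [mulL61] using this
  have e11 : c₁ * v 1 = 0 := by
    have := congrFun h1 1; simpa [mulL61] using this
  have e21 : c₂ * v 1 = 1 := by
    have := congrFun h2 1; simpa [mulL61] using this
  have hc₁ : c₁ = 0 := by
    have : c₁ * (c₂ * v 1) = c₂ * (c₁ * v 1) := by ring
    rw [e21, e11, mul_one, mul_zero] at this
    exact this
  rw [hc₁, zero_mul] at e10
  exact zero_ne_one e10
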